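/- arXiv:math/0603593 — 5 statements merged into one kernel-verified Lean document; each statement's English description precedes it below -/
import Mathlib

section
/- Fix T' > 0 and a group H with a homomorphism m : H → ℝ/T'ℤ. Let {x}_{T'} = x − T'[x/T'] be the representative in [0,T'). For ẏ ∈ ℝ/T'ℤ and (h,s) ∈ H × ℝ, define ρ(ẏ, h, s) = (h, s − {ẏ − m(h) + ṡ}_{T'} + {ẏ}_{T'}) ∈ H × ℝ, where ṡ = s mod T'ℤ and {ż}_{T'} means the [0,T') representative of ż. Then ρ satisfies the groupoid-homomorphism (crossed homomorphism) identity: ρ(ẏ, hk, s+t) = ρ(ẏ, h, s)·ρ(ẏ − ṡ + m(h), k, t) in the group H × ℝ, for all ẏ ∈ ℝ/T'ℤ, h, k ∈ H, s, t ∈ ℝ. Moreover ρ(ẏ, h, s) always lies in the subgroup H_m = {(h,u) ∈ H × ℝ : m(h) = u̇}. -/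
/-- The canonical retraction `ρ(ẏ, h, s) = (h, s − {ẏ − m(h) + ṡ}_{T'} + {ẏ}_{T'})`
onto the stabilizer subgroup `H_m = {(h,u) : m(h) = u̇}` satisfies the crossed
(groupoid) homomorphism identity
`ρ(ẏ, hk, s+t) = ρ(ẏ, h, s) · ρ(ẏ·(h,s), k, t)` (product in the group `H × ℝ`),
and its values lie in `H_m`. Here `rep z = {z}_{T'} ∈ [0,T')` denotes the canonical
representative of `z ∈ ℝ/T'ℤ`. -/
theorem retraction_crossed_hom (T' : ℝ) (hT : 0 < T') {H : Type*} [Group H]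
    (m : H → AddCircle T') (hm : ∀ h k : H, m (h * k) = m h + m k)
    (rep : AddCircle T' → ℝ)
    (hrep : ∀ z : AddCircle T', rep z ∈ Set.Ico (0 : ℝ) T' ∧ ((rep z : ℝ) : AddCircle T') = z)
    (ρ : AddCircle T' → H → ℝ → H × ℝ)
    (hρ : ∀ (y : AddCircle T') (h : H) (s : ℝ),
      ρ y h s = (h, s - rep (y - m h + (s : AddCircle T')) + rep y)) :
    (∀ (y : AddCircle T') (h k : H) (s t : ℝ),
      ρ y (h * k) (s + t) =
        ((ρ y h s).1 * (ρ (y - m h + (s : AddCircle T')) k t).1,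
          (ρ y h s).2 + (ρ (y - m h + (s : AddCircle T')) k t).2)) ∧
    (∀ (y : AddCircle T') (h : H) (s : ℝ),
      m (ρ y h s).1 = (((ρ y h s).2 : ℝ) : AddCircle T')) := by
  constructor
  · intro y h k s t
    simp only [hρ]
    refine Prod.ext rfl ?_
    have heq : y - m (h * k) + ((s + t : ℝ) : AddCircle T')
        = (y - m h + (s : AddCircle T')) - m k + (t : AddCircle T') := by
      rw [hm, QuotientAddGroup.mk_add]
      abel
    simp only [heq]
    ring
  · intro y h s
    rw [hρ]
    show m h = _
    rw [QuotientAddGroup.mk_add, QuotientAddGroup.mk_sub,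
      (hrep (y - m h + (s : AddCircle T'))).2, (hrep y).2]
    abel
end

section
/- Let Q_m be a group with a distinguished torsion-free central element z_0, let Z = ⟨z_0⟩ ≅ ℤ and Q = Q_m/Z with quotient map π_m. Suppose c ∈ Z^3(Q_m, 𝕋) is a standard 3-cocycle, i.e., there exists d_c : Q × Q → 𝕋 such that c(p̃ z_0^m, q̃ z_0^n, r̃ z_0^ℓ) = d_c(π_m(q̃), π_m(r̃))^m · c(p̃, q̃, r̃) for all m, n, ℓ ∈ ℤ and p̃, q̃, r̃ ∈ Q_m. Then d_c(q, r) = c(z_0, q̃, r̃) for any lifts q̃, r̃, and d_c is a 2-cocycle on Q with values in 𝕋 (with trivial action): d_c(q,r)·d_c(pq,r)^{-1}·d_c(p,qr)·d_c(p,q)^{-1} = 1 for all p, q, r ∈ Q. -/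
/-- Let `Q_m` be a group with a distinguished central torsion-free element `z₀`,
`Q = Q_m/⟨z₀⟩` with quotient map `π`, and let `c` be a (normalized) standard
3-cocycle with `d`-part `d_c`, i.e.
`c(p̃ z₀^m, q̃ z₀^n, r̃ z₀^ℓ) = d_c(π q̃, π r̃)^m · c(p̃,q̃,r̃)`.
Then `d_c(q,r) = c(z₀, q̃, r̃)` for any lifts, and `d_c` is a `𝕋`-valued 2-cocycle
on `Q` (trivial action). -/
theorem standard_cocycle_d_part {Qm Q : Type*} [Group Qm] [Group Q]
    (z0 : Qm) (hz0c : ∀ x : Qm, z0 * x = x * z0)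
    (hz0tf : ∀ k : ℤ, z0 ^ k = 1 → k = 0)
    (π : Qm →* Q) (hπ : Function.Surjective π)
    (hker : ∀ x : Qm, π x = 1 ↔ ∃ k : ℤ, x = z0 ^ k)
    (c : Qm → Qm → Qm → Circle)
    (hcoc : ∀ a b d e : Qm,
      c b d e * (c (a * b) d e)⁻¹ * c a (b * d) e * (c a b (d * e))⁻¹ * c a b d = 1)
    (hnorm : ∀ q r : Qm, c 1 q r = 1)
    (dc : Q → Q → Circle)
    (hstd : ∀ (m n l : ℤ) (p q r : Qm),
      c (p * z0 ^ m) (q * z0 ^ n) (r * z0 ^ l) = dc (π q) (π r) ^ m * c p q r) :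
    (∀ q r : Qm, dc (π q) (π r) = c z0 q r) ∧
    (∀ p q r : Q, dc q r * (dc (p * q) r)⁻¹ * dc p (q * r) * (dc p q)⁻¹ = 1) := by
  have h1 : ∀ q r : Qm, dc (π q) (π r) = c z0 q r := by
    intro q r
    have h := hstd 1 0 0 1 q r
    simp [hnorm] at h
    exact h.symm
  refine ⟨h1, ?_⟩
  intro p q r
  obtain ⟨p', rfl⟩ := hπ p
  obtain ⟨q', rfl⟩ := hπ q
  obtain ⟨r', rfl⟩ := hπ r
  have h2 : c (z0 * p') q' r' = dc (π q') (π r') * c p' q' r' := by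
    have h := hstd 1 0 0 p' q' r'
    simpa [← hz0c p'] using h
  have key := hcoc z0 p' q' r'
  rw [h2, ← h1, ← h1, ← h1, map_mul, map_mul] at key
  have key' := congrArg (fun x : Circle => x⁻¹) key
  simpa [mul_comm, mul_assoc, mul_left_comm, mul_inv_rev] using key'
end

section
/- Let G be a group with central subgroup N and quotient Q = G/N with section s : Q → G, and suppose given: a homomorphism m : G → ℝ/T'ℤ with N ⊆ ker m; the ℤ-valued 2-cocycle n_Z(g,h) = ({m(g)}_{T'} + {m(h)}_{T'} − {m(gh)}_{T'})/T' on G; a standard 3-cocycle c on Q_m = {(p,u) ∈ Q × ℝ : m(p) = u̇} with distinguished central element z_0 = (1,T'), whose d-part satisfies d_c(q,r) = ν̇(n_s(q,r)) where ν̇ : N → 𝕋 is a G-invariant character (i.e., ν̇(gng^{-1}) = ν̇(n)) and n_s(q,r) = s(q)s(r)s(qr)^{-1}. Writing ḡ = (π(g), {m(g)}_{T'}) ∈ Q_m for g ∈ G, and n_N(g) = s(π(g))g^{-1} ∈ N, define c_G(g,h,k) = ν̇(n_N(k))^{−n_Z(g,h)} · c(p̄, q̄, r̄) where p = π(g), q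 = π(h), r = π(k). Then c_G is a 3-cocycle on G with values in 𝕋 (trivial action). -/
lemma aux_comm {M : Type*} [CommGroup M] (v1 v2 v3 vs x1 x2 x3 x4 x5 : M)
    (A B C D : ℤ) (hZ : B + D = A + C) (h5 : vs * v2 = v3 * v1)
    (key : x1 * (vs ^ A * x2)⁻¹ * x3 * x4⁻¹ * x5 = 1) :
    v1 ^ (-B) * x1 * (v1 ^ (-C) * x2)⁻¹ * (v1 ^ (-D) * x3) * (v2 ^ (-A) * x4)⁻¹ *
      (v3 ^ (-A) * x5) = 1 := by
  have h5A : vs ^ A * v2 ^ A = v3 ^ A * v1 ^ A := by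
    rw [← mul_zpow, ← mul_zpow, h5]
  have hE : v1 ^ (-B) * (v1 ^ (-C))⁻¹ * v1 ^ (-D) = v1 ^ (-A) := by
    rw [← zpow_neg, ← zpow_add, ← zpow_add]
    congr 1
    omega
  have key' : x1 * x2⁻¹ * x3 * x4⁻¹ * x5 = vs ^ A := by
    symm
    rw [← inv_mul_eq_one, ← key]
    simp [mul_inv_rev, mul_comm, mul_left_comm, mul_assoc]
  have step : v1 ^ (-B) * x1 * (v1 ^ (-C) * x2)⁻¹ * (v1 ^ (-D) * x3) * (v2 ^ (-A) * x4)⁻¹ *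
      (v3 ^ (-A) * x5)
      = (v1 ^ (-B) * (v1 ^ (-C))⁻¹ * v1 ^ (-D)) * (v2 ^ (-A))⁻¹ * v3 ^ (-A) *
        (x1 * x2⁻¹ * x3 * x4⁻¹ * x5) := by
    simp [mul_inv_rev, mul_comm, mul_left_comm, mul_assoc]
  rw [step, key', hE]
  calc v1 ^ (-A) * (v2 ^ (-A))⁻¹ * v3 ^ (-A) * vs ^ A
      = (vs ^ A * v2 ^ A) * ((v1 ^ A)⁻¹ * (v3 ^ A)⁻¹) := by
        simp only [zpow_neg, inv_inv]
        simp [mul_comm, mul_left_comm, mul_assoc]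
    _ = (v3 ^ A * v1 ^ A) * ((v1 ^ A)⁻¹ * (v3 ^ A)⁻¹) := by rw [h5A]
    _ = 1 := by group

/-- Lemma 3.10 of Katayama–Takesaki II. Given a central subgroup `N ≤ G`, a section
`s : Q = G/N → G`, a homomorphism `m : G → ℝ/T'ℤ` vanishing on `N`, the integer-valued
2-cocycle `n_Z(g,h) = ({m g}_{T'} + {m h}_{T'} − {m(gh)}_{T'})/T'`, a group `Q_m` with
distinguished central torsion-free element `z₀`, lifts `ḡ ∈ Q_m` with
`ḡ·h̄ = z₀^{n_Z(g,h)}·(gh)‾`, a `G`-invariant character `ν̇` of `N`, and a normalized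
standard 3-cocycle `c` on `Q_m` whose `d`-part is `ν̇(n_s(q,r))`, the function
`c_G(g,h,k) = ν̇(n_N k)^{−n_Z(g,h)} · c(ḡ, h̄, k̄)` is a `𝕋`-valued 3-cocycle on `G`
(trivial action), where `n_N(g) = s(π g)·g⁻¹`. -/
theorem pullback_obstruction_is_cocycle {G Qm : Type*} [Group G] [Group Qm]
    (N : Subgroup G) [N.Normal] (hN : N ≤ Subgroup.center G)
    (s : G ⧸ N → G) (hs : ∀ q : G ⧸ N, ((s q : G) : G ⧸ N) = q) (hs1 : s 1 = 1)
    (T' : ℝ) (hT : 0 < T')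
    (m : G → AddCircle T') (hm : ∀ g h : G, m (g * h) = m g + m h)
    (hmN : ∀ n ∈ N, m n = 0)
    (rep : AddCircle T' → ℝ)
    (hrep : ∀ z : AddCircle T', rep z ∈ Set.Ico (0 : ℝ) T' ∧ ((rep z : ℝ) : AddCircle T') = z)
    (nZ : G → G → ℤ)
    (hnZ : ∀ g h : G, (nZ g h : ℝ) * T' = rep (m g) + rep (m h) - rep (m (g * h)))
    (z0 : Qm) (hz0c : ∀ x : Qm, z0 * x = x * z0)
    (hz0tf : ∀ k : ℤ, z0 ^ k = 1 → k = 0)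
    (bar : G → Qm)
    (hbar : ∀ g h : G, bar g * bar h = z0 ^ nZ g h * bar (g * h))
    (ν : G → Circle)
    (hν : ∀ a b : G, a ∈ N → b ∈ N → ν (a * b) = ν a * ν b)
    (hνinv : ∀ g n : G, n ∈ N → ν (g * n * g⁻¹) = ν n)
    (c : Qm → Qm → Qm → Circle)
    (hcoc : ∀ a b d e : Qm,
      c b d e * (c (a * b) d e)⁻¹ * c a (b * d) e * (c a b (d * e))⁻¹ * c a b d = 1)
    (hnorm : ∀ q r : Qm, c 1 q r = 1)
    (hstd : ∀ (a b e : ℤ) (g h k : G),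
      c (bar g * z0 ^ a) (bar h * z0 ^ b) (bar k * z0 ^ e) =
        ν (s ((h : G ⧸ N)) * s ((k : G ⧸ N)) * (s (((h * k : G) : G ⧸ N)))⁻¹) ^ a *
          c (bar g) (bar h) (bar k))
    (cG : G → G → G → Circle)
    (hcG : ∀ g h k : G,
      cG g h k = ν (s ((k : G ⧸ N)) * k⁻¹) ^ (-(nZ g h)) * c (bar g) (bar h) (bar k)) :
    ∀ g h k l : G,
      cG h k l * (cG (g * h) k l)⁻¹ * cG g (h * k) l * (cG g h (k * l))⁻¹ * cG g h k = 1 := by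
  intro g h k l
  -- membership of n_N x in N
  have memN : ∀ x : G, s ((x : G ⧸ N)) * x⁻¹ ∈ N := by
    intro x
    have hx : ((s ((x : G ⧸ N)) * x⁻¹ : G) : G ⧸ N) = 1 := by
      rw [QuotientGroup.mk_mul, hs]
      simp
    exact (QuotientGroup.eq_one_iff _).mp hx
  -- membership of n_s(k,l) in N
  have memS : s ((k : G ⧸ N)) * s ((l : G ⧸ N)) * (s (((k * l : G) : G ⧸ N)))⁻¹ ∈ N := by
    have hx : ((s ((k : G ⧸ N)) * s ((l : G ⧸ N)) * (s (((k * l : G) : G ⧸ N)))⁻¹ : G) :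
        G ⧸ N) = 1 := by
      rw [QuotientGroup.mk_mul, QuotientGroup.mk_mul, QuotientGroup.mk_inv, hs, hs, hs]
      simp only [QuotientGroup.mk_mul, mul_inv_rev]
      group
    exact (QuotientGroup.eq_one_iff _).mp hx
  -- z0^n is central
  have hcom : ∀ (n : ℤ) (x : Qm), z0 ^ n * x = x * z0 ^ n := by
    intro n x
    exact (Commute.zpow_left (show Commute z0 x from hz0c x) n).eq
  have hb : ∀ a b : G, bar a * bar b = bar (a * b) * z0 ^ nZ a b := by
    intro a b
    rw [hbar, hcom]
  -- standardness consequences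
  have hstd1 : ∀ (a : ℤ) (x y w : G), c (bar x * z0 ^ a) (bar y) (bar w) =
      ν (s ((y : G ⧸ N)) * s ((w : G ⧸ N)) * (s (((y * w : G) : G ⧸ N)))⁻¹) ^ a *
        c (bar x) (bar y) (bar w) := by
    intro a x y w
    have := hstd a 0 0 x y w
    simpa using this
  have hstd2 : ∀ (b : ℤ) (x y w : G), c (bar x) (bar y * z0 ^ b) (bar w) =
      c (bar x) (bar y) (bar w) := by
    intro b x y w
    have := hstd 0 b 0 x y w
    simpa using this
  have hstd3 : ∀ (e : ℤ) (x y w : G), c (bar x) (bar y) (bar w * z0 ^ e) =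
      c (bar x) (bar y) (bar w) := by
    intro e x y w
    have := hstd 0 0 e x y w
    simpa using this
  -- the integer 2-cocycle identity
  have hZ : nZ h k + nZ g (h * k) = nZ g h + nZ (g * h) k := by
    have e : ((nZ h k + nZ g (h * k) : ℤ) : ℝ) * T' = ((nZ g h + nZ (g * h) k : ℤ) : ℝ) * T' := by
      push_cast
      rw [add_mul, add_mul, hnZ, hnZ, hnZ, hnZ, ← mul_assoc g h k]
      ring
    exact_mod_cast mul_right_cancel₀ (ne_of_gt hT) e
  -- the ν identity
  have hν5 : ν (s ((k : G ⧸ N)) * s ((l : G ⧸ N)) * (s (((k * l : G) : G ⧸ N)))⁻¹) *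
      ν (s (((k * l : G) : G ⧸ N)) * (k * l)⁻¹) =
      ν (s ((k : G ⧸ N)) * k⁻¹) * ν (s ((l : G ⧸ N)) * l⁻¹) := by
    have memConj : s ((k : G ⧸ N)) * (s ((l : G ⧸ N)) * l⁻¹) * (s ((k : G ⧸ N)))⁻¹ ∈ N :=
      Subgroup.Normal.conj_mem ‹N.Normal› _ (memN l) _
    have e1 : (s ((k : G ⧸ N)) * s ((l : G ⧸ N)) * (s (((k * l : G) : G ⧸ N)))⁻¹) *
        (s (((k * l : G) : G ⧸ N)) * (k * l)⁻¹) =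
        (s ((k : G ⧸ N)) * (s ((l : G ⧸ N)) * l⁻¹) * (s ((k : G ⧸ N)))⁻¹) *
          (s ((k : G ⧸ N)) * k⁻¹) := by
      group
    rw [← hν _ _ memS (memN (k * l)), e1, hν _ _ memConj (memN k),
      hνinv _ _ (memN l), mul_comm]
  -- the cocycle identity for c at lifted points
  have key := hcoc (bar g) (bar h) (bar k) (bar l)
  rw [hb g h, hb h k, hb k l, hstd1, hstd2, hstd3] at key
  rw [hcG, hcG, hcG, hcG, hcG]
  exact aux_comm _ _ _ _ _ _ _ _ _ (nZ g h) (nZ h k) (nZ (g * h) k) (nZ g (h * k)) hZ hν5 key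
end

section
/- Fix T' > 0 and T = 2π/T'. Define u : (ℝ/Tℤ) × ℝ → 𝕋 by u(ṡ; x) = exp(i T' {s}_T [x/T']), where {s}_T ∈ [0,T) is the representative of ṡ. Then: (a) for each fixed x, the map ṡ ↦ u(ṡ; x) is a character of ℝ/Tℤ, i.e., u(ṡ + ṫ; x) = u(ṡ; x)·u(ṫ; x); (b) the translation coboundary u(ṡ; x+t)·u(ṡ; x)^{-1} = exp(i T' {s}_T ([(x+t)/T'] − [x/T'])) equals the cocycle c(s,t,x)^{-1} where c(s,t,x) = exp(iT's([x/T'] − [(x+t)/T'])). -/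
lemma key_exp_fract (T' T : ℝ) (hT' : 0 < T')
    (hT : T = 2 * Real.pi / T') (s : ℝ) (m : ℤ) :
    Complex.exp (Complex.I * T' * (s - T * ⌊s / T⌋) * (m : ℂ)) =
      Complex.exp (Complex.I * T' * s * (m : ℂ)) := by
  have hTT : (T' : ℂ) * T = 2 * Real.pi := by
    rw [hT]
    have : (T' : ℂ) ≠ 0 := by exact_mod_cast hT'.ne'
    push_cast
    field_simp
  have h1 : Complex.I * T' * (s - T * ⌊s / T⌋) * (m : ℂ) =
      Complex.I * T' * s * (m : ℂ) +
        ((-(⌊s / T⌋ * m) : ℤ) : ℂ) * (2 * Real.pi * Complex.I) := by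
    push_cast
    linear_combination (-Complex.I * (⌊s / T⌋ : ℂ) * (m : ℂ)) * hTT
  rw [h1, Complex.exp_add, Complex.exp_int_mul_two_pi_mul_I, mul_one]

/-- For `T' > 0` and `T = 2π/T'`, the function
`u(ṡ; x) = exp(i T' {s}_T ⌊x/T'⌋)` satisfies:
(a) for each `x`, `ṡ ↦ u(ṡ;x)` is a character of `ℝ/Tℤ`;
(b) its translation coboundary `u(ṡ; x+t)·u(ṡ; x)⁻¹` equals
`exp(i T' {s}_T (⌊(x+t)/T'⌋ − ⌊x/T'⌋))`, which is the inverse of the cocycle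
`c(s,t,x) = exp(i T' s (⌊x/T'⌋ − ⌊(x+t)/T'⌋))`. -/
theorem periodic_unitary_cobounds_cocycle (T' T : ℝ) (hT' : 0 < T')
    (hT : T = 2 * Real.pi / T')
    (u : ℝ → ℝ → ℂ)
    (hu : ∀ s x : ℝ,
      u s x = Complex.exp (Complex.I * T' * (s - T * ⌊s / T⌋) * (⌊x / T'⌋ : ℂ))) :
    (∀ s t x : ℝ, u (s + t) x = u s x * u t x) ∧
    (∀ s t x : ℝ, u s (x + t) * (u s x)⁻¹ =
      Complex.exp (Complex.I * T' * (s - T * ⌊s / T⌋) *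
        ((⌊(x + t) / T'⌋ : ℂ) - (⌊x / T'⌋ : ℂ)))) ∧
    (∀ s t x : ℝ, u s (x + t) * (u s x)⁻¹ =
      (Complex.exp (Complex.I * T' * s * ((⌊x / T'⌋ : ℂ) - (⌊(x + t) / T'⌋ : ℂ))))⁻¹) := by
  have hu' : ∀ s x : ℝ, u s x = Complex.exp (Complex.I * T' * s * (⌊x / T'⌋ : ℂ)) := by
    intro s x
    rw [hu, key_exp_fract T' T hT' hT]
  refine ⟨?_, ?_, ?_⟩
  · intro s t x
    rw [hu', hu', hu', ← Complex.exp_add]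
    congr 1
    push_cast
    ring
  · intro s t x
    rw [hu, hu, ← Complex.exp_neg, ← Complex.exp_add]
    congr 1
    ring
  · intro s t x
    rw [hu', hu', ← Complex.exp_neg, ← Complex.exp_add, ← Complex.exp_neg]
    congr 1
    ring
end

section
/- Let G be a group, A an abelian group with G-action α, and N a normal subgroup of G acting trivially on A. A characteristic cocycle is a pair (λ, μ) with μ ∈ Z^2(N, A) and λ : N × G → A satisfying: λ(m, gh) = λ(m,g)·α_g(λ(g^{-1}mg, h)); λ(m, n) = μ(n, n^{-1}mn)·μ(m,n)^{-1} for m, n ∈ N; and λ(m,g)·λ(n,g)·λ(mn,g)^{-1} = α_g(μ(g^{-1}mg, g^{-1}ng))·μ(m,n)^{-1}. Given such (λ, μ) with μ normalized, let E = A ⋊_{μ} N with multiplication (a,m)(b,n) = (ab·μ(m,n), mn), and for g ∈ G define γ_g : E → E by γ_g(a, g^{-1}mg) = (α_g(a)·λ(m, g), m) for a ∈ A, m ∈ N. Then γ_g ∘ γ_h = γ_{gh} for all g, h ∈ G, and each γ_g is a group automorphism of E. -/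
/-- Multiplication of the twisted product `E = A ⋊_μ N`:
`(a,m)(b,n) = (a·b·μ(m,n), mn)`. -/
def emul {G A : Type*} [Group G] [CommGroup A] {N : Subgroup G} (μ : N → N → A) :
    (A × N) → (A × N) → (A × N) :=
  fun p q => (p.1 * q.1 * μ p.2 q.2, p.2 * q.2)

/-- The candidate action `γ_g(a, n) = (α_g(a)·λ(g n g⁻¹, g), g n g⁻¹)` of `G` on
`E = A ⋊_μ N`, where `cj g n = g n g⁻¹`. -/
def chAct {G A : Type*} [Group G] [CommGroup A] (α : G →* MulAut A) {N : Subgroup G}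
    (lam : N → G → A) (cj : G → N → N) : G → (A × N) → (A × N) :=
  fun g p => (α g p.1 * lam (cj g p.2) g, cj g p.2)

/-- If `(λ, μ)` is a characteristic cocycle (the three identities below), then the maps
`γ_g(a, n) = (α_g(a)·λ(g n g⁻¹, g), g n g⁻¹)` satisfy `γ_g ∘ γ_h = γ_{gh}` and each
`γ_g` is a group automorphism of the twisted product `E = A ⋊_μ N`. -/
theorem characteristic_cocycle_gives_action {G A : Type*} [Group G] [CommGroup A]
    (α : G →* MulAut A) (N : Subgroup G) [N.Normal]
    (htriv : ∀ (n : N) (a : A), α (n : G) a = a)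
    (μ : N → N → A)
    (hμcoc : ∀ m n k : N, μ m n * μ (m * n) k = μ n k * μ m (n * k))
    (hμnorm : ∀ n : N, μ 1 n = 1 ∧ μ n 1 = 1)
    (lam : N → G → A)
    (cj : G → N → N) (hcj : ∀ (g : G) (n : N), ((cj g n : G)) = g * (n : G) * g⁻¹)
    (h1 : ∀ (n : N) (g h : G), lam n (g * h) = lam n g * α g (lam (cj g⁻¹ n) h))
    (h2 : ∀ m n : N, lam m (n : G) = μ n (n⁻¹ * m * n) * (μ m n)⁻¹)
    (h3 : ∀ (m n : N) (g : G),
      lam m g * lam n g * (lam (m * n) g)⁻¹ =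
        α g (μ (cj g⁻¹ m) (cj g⁻¹ n)) * (μ m n)⁻¹) :
    (∀ (g h : G) (p : A × N),
      chAct α lam cj g (chAct α lam cj h p) = chAct α lam cj (g * h) p) ∧
    (∀ g : G, Function.Bijective (chAct α lam cj g)) ∧
    (∀ (g : G) (p q : A × N),
      chAct α lam cj g (emul μ p q) = emul μ (chAct α lam cj g p) (chAct α lam cj g q)) := by
  have hcj_comp : ∀ (g h : G) (n : N), cj g (cj h n) = cj (g * h) n := by
    intro g h n
    apply Subtype.ext
    simp only [hcj]
    group
  have hcj_one : ∀ n : N, cj 1 n = n := by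
    intro n
    apply Subtype.ext
    simp [hcj]
  have hlam_one : ∀ n : N, lam n 1 = 1 := by
    intro n
    have := h1 n 1 1
    simp [hcj_one, inv_one] at this
    exact this
  have hstep : ∀ (g h : G) (p : A × N),
      chAct α lam cj g (chAct α lam cj h p) = chAct α lam cj (g * h) p := by
    intro g h p
    simp only [chAct, hcj_comp]
    refine Prod.ext ?_ rfl
    have hc : cj g⁻¹ (cj (g * h) p.2) = cj h p.2 := by
      rw [hcj_comp]; congr 1; group
    rw [h1 (cj (g * h) p.2) g h, hc, map_mul, map_mul, MulAut.mul_apply]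
    simp [mul_comm, mul_assoc, mul_left_comm]
  have hid : ∀ p : A × N, chAct α lam cj 1 p = p := by
    intro p
    simp [chAct, hcj_one, hlam_one]
  refine ⟨hstep, ?_, ?_⟩
  · intro g
    refine Function.bijective_iff_has_inverse.mpr ⟨chAct α lam cj g⁻¹, ?_, ?_⟩
    · intro p; rw [hstep]; simp [hid]
    · intro p; rw [hstep]; simp [hid]
  · intro g p q
    simp only [chAct, emul]
    have e3 : cj g p.2 * cj g q.2 = cj g (p.2 * q.2) := by
      apply Subtype.ext
      push_cast [hcj]
      group
    refine Prod.ext ?_ e3.symm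
    have h3' := h3 (cj g p.2) (cj g q.2) g
    have e1 : cj g⁻¹ (cj g p.2) = p.2 := by rw [hcj_comp]; simp [hcj_one]
    have e2 : cj g⁻¹ (cj g q.2) = q.2 := by rw [hcj_comp]; simp [hcj_one]
    rw [e1, e2, e3] at h3'
    have key : α g (μ p.2 q.2) * lam (cj g (p.2 * q.2)) g =
        lam (cj g p.2) g * lam (cj g q.2) g * μ (cj g p.2) (cj g q.2) := by
      have hdiv : (lam (cj g p.2) g * lam (cj g q.2) g) / lam (cj g (p.2 * q.2)) g =
          α g (μ p.2 q.2) / μ (cj g p.2) (cj g q.2) := by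
        rw [div_eq_mul_inv, div_eq_mul_inv, h3']
      exact (div_eq_div_iff_mul_eq_mul.mp hdiv).symm
    show α g (p.1 * q.1 * μ p.2 q.2) * lam (cj g (p.2 * q.2)) g =
        α g p.1 * lam (cj g p.2) g * (α g q.1 * lam (cj g q.2) g) *
          μ (cj g p.2) (cj g q.2)
    calc α g (p.1 * q.1 * μ p.2 q.2) * lam (cj g (p.2 * q.2)) g
        = α g p.1 * α g q.1 * (α g (μ p.2 q.2) * lam (cj g (p.2 * q.2)) g) := by
          simp [map_mul, mul_assoc]
      _ = α g p.1 * α g q.1 *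
          (lam (cj g p.2) g * lam (cj g q.2) g * μ (cj g p.2) (cj g q.2)) := by rw [key]
      _ = α g p.1 * lam (cj g p.2) g * (α g q.1 * lam (cj g q.2) g) *
          μ (cj g p.2) (cj g q.2) := by
          simp [mul_comm, mul_assoc, mul_left_comm]
end
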